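/- arXiv:2410.03687 — 2 statements merged into one kernel-verified Lean document; each statement's English description precedes it below -/
import Mathlib

section
/- Let X be a Banach space, f, g : X → ℝ ∪ {+∞} proper convex functions, x̄ ∈ dom f ∩ dom g, and suppose g is an ε-perturbation of f near x̄, i.e. limsup_{x→x̄} |(f(x) − g(x)) − (f(x̄) − g(x̄))| / ‖x − x̄‖ ≤ ε. Then for every h ∈ X with ‖h‖ = 1, d⁺f(x̄, h) − ε ≤ d⁺g(x̄, h) ≤ d⁺f(x̄, h) + ε, and hence | inf_{‖h‖=1} d⁺g(x̄, h) − inf_{‖h‖=1} d⁺f(x̄, h) | ≤ ε. -/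
open Filter Topology Metric Set

variable {X : Type*} [NormedAddCommGroup X] [NormedSpace ℝ X]

/-- difference quotient (f(x+th)-f(x))/t, with values in EReal -/
noncomputable def dquot (f : X → EReal) (x h : X) (t : ℝ) : EReal :=
  ((t⁻¹ : ℝ) : EReal) * (f (x + t • h) - f x)

/-- directional derivative d⁺f(x,h) = inf_{t>0} (f(x+th)-f(x))/t -/
noncomputable def dirDeriv (f : X → EReal) (x h : X) : EReal :=
  ⨅ t : {t : ℝ // 0 < t}, dquot f x h t

/-- convexity for extended-real-valued functions -/
def EConvexOn (f : X → EReal) : Prop :=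
  ∀ x y : X, ∀ a b : ℝ, 0 ≤ a → 0 ≤ b → a + b = 1 →
    f (a • x + b • y) ≤ (a : EReal) * f x + (b : EReal) * f y

/-- properness: somewhere finite and nowhere -∞ -/
def EProper (f : X → EReal) : Prop := (∃ x, f x ≠ ⊤) ∧ ∀ x, f x ≠ ⊥

/-- inf of directional derivatives over the unit sphere -/
noncomputable def sphInf (f : X → EReal) (x : X) : EReal :=
  ⨅ h : {h : X // ‖h‖ = 1}, dirDeriv f x h

/-- global error bound modulus Er(f) -/
noncomputable def ErG (f : X → EReal) : EReal :=
  ⨅ x : {x : X // 0 < f x}, f x / ((Metric.infDist x.1 {y : X | f y ≤ 0} : ℝ) : EReal)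

/-- local error bound modulus Er(f,x₀) -/
noncomputable def ErL (f : X → EReal) (x₀ : X) : EReal :=
  Filter.liminf (fun x => f x / ((Metric.infDist x {y : X | f y ≤ 0} : ℝ) : EReal))
    (𝓝 x₀ ⊓ Filter.principal {x : X | 0 < f x})

/-- g is an ε-perturbation of f near x₀ :
limsup_{x→x₀} |(f(x)-g(x))-(f(x₀)-g(x₀))|/‖x-x₀‖ ≤ ε -/
noncomputable def PtbAt (f g : X → EReal) (x₀ : X) (ε : ℝ) : Prop :=
  Filter.limsup (fun x => ((‖x - x₀‖⁻¹ : ℝ) : EReal) *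
      max ((f x - g x) - (f x₀ - g x₀)) ((g x - f x) - (g x₀ - f x₀))) (𝓝[≠] x₀)
    ≤ (ε : EReal)

set_option linter.unusedSectionVars false

lemma ereal_sub_le_iff_le_add {a b : EReal} {c : ℝ} : a - (c : EReal) ≤ b ↔ a ≤ b + (c : EReal) :=
  EReal.sub_le_iff_le_add (Or.inl (EReal.coe_ne_bot c)) (Or.inl (EReal.coe_ne_top c))

lemma dquot_mono {f : X → EReal} (hconv : EConvexOn f) (hb : ∀ y, f y ≠ ⊥)
    (x h : X) (hfx : f x ≠ ⊤) {s t : ℝ} (hs : 0 < s) (hst : s ≤ t) :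
    dquot f x h s ≤ dquot f x h t := by
  have ht : 0 < t := hs.trans_le hst
  set r : ℝ := (f x).toReal with hrdef
  have hr : (r : EReal) = f x := EReal.coe_toReal hfx (hb x)
  by_cases hF : f (x + t • h) = ⊤
  · have : dquot f x h t = ⊤ := by
      rw [dquot, hF, ← hr, EReal.top_sub_coe, EReal.coe_mul_top_of_pos (by positivity)]
    simp [this]
  · set p : ℝ := (f (x + t • h)).toReal with hpdef
    have hp : (p : EReal) = f (x + t • h) := EReal.coe_toReal hF (hb _)
    have key := hconv x (x + t • h) (1 - s/t) (s/t)
      (by rw [sub_nonneg]; exact div_le_one_of_le₀ hst ht.le)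
      (by positivity) (by ring)
    have hxs : (1 - s/t) • x + (s/t) • (x + t • h) = x + s • h := by
      rw [smul_add, smul_smul, ← add_assoc, ← add_smul, sub_add_cancel, one_smul,
        div_mul_cancel₀ _ ht.ne']
    rw [hxs, ← hr, ← hp] at key
    have : f (x + s • h) - (r : EReal) ≤ ((((1 - s/t) * r + (s/t) * p) - r : ℝ) : EReal) := by
      push_cast
      exact EReal.sub_le_sub key le_rfl
    calc dquot f x h s = ((s⁻¹ : ℝ) : EReal) * (f (x + s • h) - (r : EReal)) := by rw [dquot, hr]
      _ ≤ ((s⁻¹ : ℝ) : EReal) * ((((1 - s/t) * r + (s/t) * p) - r : ℝ) : EReal) :=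
          mul_le_mul_of_nonneg_left this (EReal.coe_nonneg.2 (by positivity))
      _ = ((t⁻¹ * (p - r) : ℝ) : EReal) := by
          rw [← EReal.coe_mul]; congr 1; field_simp; ring
      _ = dquot f x h t := by rw [dquot, ← hr, ← hp, ← EReal.coe_sub, ← EReal.coe_mul]

lemma ptbAt_symm {f g : X → EReal} {x₀ : X} {ε : ℝ} (h : PtbAt f g x₀ ε) : PtbAt g f x₀ ε := by
  unfold PtbAt at h ⊢
  convert h using 4 with x
  exact max_comm _ _

lemma le_add_of_forall_pos_le {a b : EReal} {ε : ℝ}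
    (H : ∀ δ : ℝ, 0 < δ → a ≤ b + ((ε + δ : ℝ) : EReal)) : a ≤ b + (ε : EReal) := by
  induction b with
  | bot =>
    have := H 1 one_pos
    rw [EReal.bot_add] at this ⊢
    exact this
  | coe b =>
    induction a with
    | bot => exact bot_le
    | coe a =>
      rw [← EReal.coe_add, EReal.coe_le_coe_iff]
      by_contra hc
      push_neg at hc
      have := H ((a - (b + ε)) / 2) (by linarith)
      rw [← EReal.coe_add, EReal.coe_le_coe_iff] at this
      linarith
    | top =>
      have := H 1 one_pos
      rw [← EReal.coe_add] at this
      exact absurd (this.trans_lt (EReal.coe_lt_top _)) (lt_irrefl _)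
  | top => rw [EReal.top_add_coe]; exact le_top

lemma core_ineq {f g : X → EReal} (hfconv : EConvexOn f)
    (hfb : ∀ y, f y ≠ ⊥) (hgb : ∀ y, g y ≠ ⊥)
    (xb : X) (hfxb : f xb ≠ ⊤) (hgxb : g xb ≠ ⊤) {ε : ℝ} (hptb : PtbAt f g xb ε)
    (h : X) (hh : ‖h‖ = 1) : dirDeriv g xb h ≤ dirDeriv f xb h + (ε : EReal) := by
  apply le_add_of_forall_pos_le
  intro δ hδ
  -- eventually bound
  have hev : ∀ᶠ x in 𝓝[≠] xb, ((‖x - xb‖⁻¹ : ℝ) : EReal) *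
      max ((f x - g x) - (f xb - g xb)) ((g x - f x) - (g xb - f xb)) < ((ε + δ : ℝ) : EReal) :=
    Filter.eventually_lt_of_limsup_lt
      (lt_of_le_of_lt hptb (EReal.coe_lt_coe_iff.2 (by linarith)))
  rw [eventually_nhdsWithin_iff, Metric.eventually_nhds_iff] at hev
  obtain ⟨η, hη, hb⟩ := hev
  -- real values at xb
  set r : ℝ := (f xb).toReal with hrdef
  have hr : (r : EReal) = f xb := EReal.coe_toReal hfxb (hfb xb)
  set q : ℝ := (g xb).toReal with hqdef
  have hq : (q : EReal) = g xb := EReal.coe_toReal hgxb (hgb xb)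
  -- Claim A
  have claimA : ∀ t : ℝ, 0 < t → t < η →
      dquot g xb h t ≤ dquot f xb h t + ((ε + δ : ℝ) : EReal) := by
    intro t ht htη
    set x := xb + t • h with hxdef
    have hxsub : x - xb = t • h := by simp [hxdef]
    have hnx : ‖x - xb‖ = t := by
      rw [hxsub, norm_smul, hh, Real.norm_eq_abs, abs_of_pos ht, mul_one]
    have hxne : x ∈ ({xb}ᶜ : Set X) := by
      have hth : t • h ≠ 0 := smul_ne_zero ht.ne' (fun h0 => by simp [h0] at hh)
      simp only [mem_compl_iff, mem_singleton_iff, hxdef, add_eq_left]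
      exact hth
    have hdist : dist x xb < η := by rw [dist_eq_norm, hnx]; exact htη
    have hbx := hb hdist hxne
    have hbound : ((t⁻¹ : ℝ) : EReal) * ((g x - f x) - (g xb - f xb)) < ((ε + δ : ℝ) : EReal) := by
      refine lt_of_le_of_lt ?_ hbx
      rw [hnx]
      exact mul_le_mul_of_nonneg_left (le_max_right _ _)
        (EReal.coe_nonneg.2 (by positivity))
    by_cases hFtop : f x = ⊤
    · have : dquot f xb h t = ⊤ := by
        rw [dquot, ← hxdef, hFtop, ← hr, EReal.top_sub_coe,
          EReal.coe_mul_top_of_pos (by positivity)]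
      rw [this, EReal.top_add_coe]
      exact le_top
    · set p : ℝ := (f x).toReal with hpdef
      have hp : (p : EReal) = f x := EReal.coe_toReal hFtop (hfb x)
      by_cases hGtop : g x = ⊤
      · exfalso
        rw [hGtop, ← hp, ← hq, ← hr, EReal.top_sub_coe, ← EReal.coe_sub,
          EReal.top_sub_coe, EReal.coe_mul_top_of_pos (by positivity)] at hbound
        exact (not_top_lt hbound)
      · set m : ℝ := (g x).toReal with hmdef
        have hm : (m : EReal) = g x := EReal.coe_toReal hGtop (hgb x)
        rw [← hm, ← hp, ← hq, ← hr] at hbound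
        rw [← EReal.coe_sub, ← EReal.coe_sub, ← EReal.coe_sub, ← EReal.coe_mul,
          EReal.coe_lt_coe_iff] at hbound
        rw [dquot, dquot, ← hxdef, ← hm, ← hp, ← hq, ← hr, ← EReal.coe_sub, ← EReal.coe_sub,
          ← EReal.coe_mul, ← EReal.coe_mul, ← EReal.coe_add, EReal.coe_le_coe_iff]
        have hring : t⁻¹ * (m - q) = t⁻¹ * ((m - p) - (q - r)) + t⁻¹ * (p - r) := by ring
        linarith
  -- Claim B
  have claimB : ∀ t : {t : ℝ // 0 < t},
      dirDeriv g xb h ≤ dquot f xb h t + ((ε + δ : ℝ) : EReal) := by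
    rintro ⟨t, ht⟩
    have ht' : 0 < min t (η / 2) := lt_min ht (by linarith)
    have h1 : dirDeriv g xb h ≤ dquot g xb h (min t (η / 2)) := by
      rw [dirDeriv]; exact iInf_le _ (⟨min t (η / 2), ht'⟩ : {t : ℝ // 0 < t})
    calc dirDeriv g xb h ≤ dquot g xb h (min t (η / 2)) := h1
      _ ≤ dquot f xb h (min t (η / 2)) + ((ε + δ : ℝ) : EReal) :=
          claimA _ ht' (lt_of_le_of_lt (min_le_right _ _) (by linarith))
      _ ≤ dquot f xb h t + ((ε + δ : ℝ) : EReal) :=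
          add_le_add_left (dquot_mono hfconv hfb xb h hfxb ht' (min_le_left _ _)) _
  rw [← ereal_sub_le_iff_le_add]
  conv_rhs => rw [dirDeriv]
  exact le_iInf fun t => ereal_sub_le_iff_le_add.2 (claimB t)

/-- an ε-perturbation changes directional derivatives by at most ε. -/
theorem stmt7 [CompleteSpace X] (f g : X → EReal)
    (hfconv : EConvexOn f) (hfproper : EProper f)
    (hgconv : EConvexOn g) (hgproper : EProper g)
    (xb : X) (hfxb : f xb ≠ ⊤) (hgxb : g xb ≠ ⊤)
    (ε : ℝ) (hε : 0 ≤ ε) (hptb : PtbAt f g xb ε) :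
    (∀ h : X, ‖h‖ = 1 →
      dirDeriv f xb h - (ε : EReal) ≤ dirDeriv g xb h ∧
        dirDeriv g xb h ≤ dirDeriv f xb h + (ε : EReal)) ∧
    sphInf f xb - (ε : EReal) ≤ sphInf g xb ∧
      sphInf g xb ≤ sphInf f xb + (ε : EReal) := by
  have hfb := hfproper.2
  have hgb := hgproper.2
  have key1 : ∀ h : X, ‖h‖ = 1 → dirDeriv g xb h ≤ dirDeriv f xb h + (ε : EReal) :=
    fun h hh => core_ineq hfconv hfb hgb xb hfxb hgxb hptb h hh
  have key2 : ∀ h : X, ‖h‖ = 1 → dirDeriv f xb h ≤ dirDeriv g xb h + (ε : EReal) :=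
    fun h hh => core_ineq hgconv hgb hfb xb hgxb hfxb (ptbAt_symm hptb) h hh
  refine ⟨fun h hh => ⟨ereal_sub_le_iff_le_add.2 (key2 h hh), key1 h hh⟩, ?_, ?_⟩
  · show sphInf f xb - (ε : EReal) ≤ ⨅ h : {h : X // ‖h‖ = 1}, dirDeriv g xb h
    refine le_iInf fun ⟨h, hh⟩ => ?_
    calc sphInf f xb - (ε : EReal) ≤ dirDeriv f xb h - (ε : EReal) := by
          refine EReal.sub_le_sub ?_ le_rfl
          rw [sphInf]
          exact iInf_le _ (⟨h, hh⟩ : {h : X // ‖h‖ = 1})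
      _ ≤ dirDeriv g xb h := ereal_sub_le_iff_le_add.2 (key2 h hh)
  · rw [← ereal_sub_le_iff_le_add]
    show sphInf g xb - (ε : EReal) ≤ ⨅ h : {h : X // ‖h‖ = 1}, dirDeriv f xb h
    refine le_iInf fun ⟨h, hh⟩ => ?_
    refine ereal_sub_le_iff_le_add.2 (le_trans ?_ (key1 h hh))
    rw [sphInf]
    exact iInf_le _ (⟨h, hh⟩ : {h : X // ‖h‖ = 1})
end

section
/- Let X be a Banach space, f : X → ℝ ∪ {+∞} proper l.s.c. convex, τ > 0, and suppose τ·d(x, S_f) ≤ [f(x)]₊ for all x ∈ X (with S_f := {x : f(x) ≤ 0} nonempty). Then for every x ∉ S_f one has inf_{‖h‖=1} d⁺f(x, h) ≤ −τ. -/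
/-!
Since `d⁺f(x, h)` is an infimum of difference quotients, the quotient along the unit direction
from `x` towards any `z ∈ S_f` already gives
`inf_{‖h‖=1} d⁺f(x, h) ≤ (f z - f x) / ‖z - x‖ ≤ -τ d(x, S_f) / ‖z - x‖`,
by the error bound at `x`. Letting `‖z - x‖` decrease to `d(x, S_f)`, which is positive because
`S_f` is closed, yields `-τ`.
-/

open Filter Topology Metric Set

variable {X : Type*} [NormedAddCommGroup X] [NormedSpace ℝ X]

theorem sphInf_le_dquot (f : X → EReal) (x : X) {h : X} (hh : ‖h‖ = 1) {t : ℝ} (ht : 0 < t) :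
    sphInf f x ≤ dquot f x h t :=
  (iInf_le _ (⟨h, hh⟩ : {h : X // ‖h‖ = 1})).trans (iInf_le _ (⟨t, ht⟩ : {t : ℝ // 0 < t}))

theorem sphInf_le_slope (f : X → EReal) {x z : X} (hxz : x ≠ z) :
    sphInf f x ≤ (((dist x z)⁻¹ : ℝ) : EReal) * (f z - f x) := by
  have ht : 0 < dist x z := dist_pos.mpr hxz
  have hh : ‖(dist x z)⁻¹ • (z - x)‖ = 1 := by
    rw [norm_smul, norm_inv, Real.norm_of_nonneg dist_nonneg, dist_eq_norm',
      inv_mul_cancel₀ (norm_ne_zero_iff.mpr _)]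
    exact sub_ne_zero.mpr hxz.symm
  have hseg : x + dist x z • (dist x z)⁻¹ • (z - x) = z := by
    rw [smul_smul, mul_inv_cancel₀ ht.ne', one_smul, add_sub_cancel]
  simpa only [dquot, hseg] using sphInf_le_dquot f x hh ht

theorem sphInf_le_of_nonpos_of_le {f : X → EReal} {x z : X} {a : ℝ} (hxz : x ≠ z)
    (hz : f z ≤ 0) (ha : (a : EReal) ≤ f x) :
    sphInf f x ≤ ((-a / dist x z : ℝ) : EReal) := by
  have hdiff : f z - f x ≤ ((-a : ℝ) : EReal) := by
    simpa using EReal.sub_le_sub hz ha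
  calc sphInf f x ≤ (((dist x z)⁻¹ : ℝ) : EReal) * (f z - f x) := sphInf_le_slope f hxz
    _ ≤ (((dist x z)⁻¹ : ℝ) : EReal) * ((-a : ℝ) : EReal) :=
        mul_le_mul_of_nonneg_left hdiff (by exact_mod_cast (inv_pos.mpr (dist_pos.mpr hxz)).le)
    _ = ((-a / dist x z : ℝ) : EReal) := by
        rw [← EReal.coe_mul, inv_mul_eq_div]

theorem stmt11_general (f : X → EReal) (hlsc : LowerSemicontinuous f)
    (hS : {x : X | f x ≤ 0}.Nonempty) (τ : ℝ)
    (heb : ∀ x : X, ((τ * Metric.infDist x {y : X | f y ≤ 0} : ℝ) : EReal) ≤ max (f x) 0) :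
    ∀ x : X, x ∉ {y : X | f y ≤ 0} → sphInf f x ≤ ((-τ : ℝ) : EReal) := by
  intro x hx
  set S := {y : X | f y ≤ 0}
  set d := infDist x S
  have hd : 0 < d := ((hlsc.isClosed_preimage 0).notMem_iff_infDist_pos hS).mp hx
  have hfx : ((τ * d : ℝ) : EReal) ≤ f x :=
    (heb x).trans_eq (max_eq_left (not_le.mp hx).le)
  have hbound : ∀ r ∈ dist x '' S, sphInf f x ≤ ((-(τ * d) / r : ℝ) : EReal) := by
    rintro _ ⟨z, hz, rfl⟩
    exact sphInf_le_of_nonpos_of_le (fun hxz => hx (hxz ▸ hz)) hz hfx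
  obtain ⟨u, -, -, hu, huS⟩ := (isGLB_infDist hS).exists_seq_antitone_tendsto (hS.image _)
  have hlim : Tendsto (fun n => ((-(τ * d) / u n : ℝ) : EReal)) atTop (𝓝 ((-τ : ℝ) : EReal)) := by
    have := (tendsto_const_nhds (x := -(τ * d))).div hu hd.ne'
    rw [neg_div, mul_div_cancel_right₀ τ hd.ne'] at this
    exact (continuous_coe_real_ereal.tendsto _).comp this
  exact ge_of_tendsto' hlim fun n => hbound _ (huS n)

/-- a global error bound forces inf_{‖h‖=1} d⁺f(x,h) ≤ -τ off the level set. -/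
theorem stmt11 [CompleteSpace X] (f : X → EReal) (hconv : EConvexOn f)
    (hproper : EProper f) (hlsc : LowerSemicontinuous f)
    (hS : {x : X | f x ≤ 0}.Nonempty) (τ : ℝ) (hτ : 0 < τ)
    (heb : ∀ x : X, ((τ * Metric.infDist x {y : X | f y ≤ 0} : ℝ) : EReal) ≤ max (f x) 0) :
    ∀ x : X, x ∉ {y : X | f y ≤ 0} → sphInf f x ≤ ((-τ : ℝ) : EReal) :=
  stmt11_general f hlsc hS τ heb
end
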